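/- Let a, b ∈ F be orthonormal vectors and let A : F → F be a linear isometry (A ∈ O(4)). Then the Killing fields coincide, X_{Aa∧Ab} = X_{a∧b} (i.e. for all p ∈ F, ⟨Ab, p⟩ • Aa − ⟨Aa, p⟩ • Ab = ⟨b, p⟩ • a − ⟨a, p⟩ • b), if and only if there exists θ ∈ ℝ such that Aa = cos θ • a + sin θ • b and Ab = −sin θ • a + cos θ • b, i.e. A preserves the plane spanned by {a, b} and restricts to it as a rotation. (This is the invariance criterion established in the proof of Theorem 4.1 of the paper.) -/

import Mathlib

/-!
For an orthonormal pair `(a', b')` the field `X_{a'∧b'}` sends `a'` to `-b'` and `b'` to `a'`.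
So if `X_{a'∧b'} = X_{a∧b}`, both `a'` and `b'` lie in the image of `X_{a∧b}`, which is
`span {a, b}`, and reading off coefficients shows that `(a', b')` is obtained from `(a, b)` by a
rotation. Conversely `X` is bilinear and alternating, so
`X_{(αa+βb)∧(γa+δb)} = (αδ - βγ) X_{a∧b}`, and a rotation has determinant `1`.
-/

open Real RealInnerProductSpace

noncomputable section

/-- The flat Euclidean four-space, whose unit sphere is `S³`. -/
abbrev F4 : Type := EuclideanSpace ℝ (Fin 4)

/-- The standard orthonormal basis of `F4`. -/
def sb4 (i : Fin 4) : F4 := EuclideanSpace.single i (1 : ℝ)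

/-- The vector field `X_{a∧b}(p) = ⟨b, p⟩ • a - ⟨a, p⟩ • b`; restricted to the unit
sphere `S³ ⊂ F4` these are exactly the Killing vector fields of `S³`. -/
def KF (a b : F4) : F4 → F4 := fun p => ⟪b, p⟫ • a - ⟪a, p⟫ • b

theorem Real.exists_cos_sin_eq_of_sq_add_sq_eq_one {u v : ℝ} (h : u ^ 2 + v ^ 2 = 1) :
    ∃ θ : ℝ, cos θ = u ∧ sin θ = v := by
  have hz : ‖(⟨u, v⟩ : ℂ)‖ = 1 := by
    rw [Complex.norm_def, Complex.normSq_mk, ← sq, ← sq, h, Real.sqrt_one]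
  refine ⟨Complex.arg ⟨u, v⟩, ?_, ?_⟩
  · simpa [hz] using Complex.norm_mul_cos_arg (⟨u, v⟩ : ℂ)
  · simpa [hz] using Complex.norm_mul_sin_arg (⟨u, v⟩ : ℂ)

theorem KF_apply (a b p : F4) : KF a b p = ⟪b, p⟫ • a - ⟪a, p⟫ • b := rfl

theorem KF_smul_add_smul (a b : F4) (α β γ δ : ℝ) :
    KF (α • a + β • b) (γ • a + δ • b) = (α * δ - β * γ) • KF a b := by
  funext p
  simp only [KF, Pi.smul_apply, inner_add_left, real_inner_smul_left]
  module

theorem KF_apply_left {a b : F4} (ha : ‖a‖ = 1) (hab : ⟪a, b⟫ = 0) : KF a b a = -b := by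
  simp [KF, real_inner_comm a b, hab, ha]

theorem KF_apply_right {a b : F4} (hb : ‖b‖ = 1) (hab : ⟪a, b⟫ = 0) : KF a b b = a := by
  simp [KF, hab, hb]

theorem exists_rotation_of_KF_eq {a b a' b' : F4} (ha : ‖a‖ = 1) (hb : ‖b‖ = 1)
    (hab : ⟪a, b⟫ = 0) (ha' : ‖a'‖ = 1) (hb' : ‖b'‖ = 1) (hab' : ⟪a', b'⟫ = 0)
    (h : KF a' b' = KF a b) :
    ∃ θ : ℝ, a' = cos θ • a + sin θ • b ∧ b' = (-sin θ) • a + cos θ • b := by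
  set u := ⟪a, a'⟫
  set v := ⟪b, a'⟫
  have hb'_eq : b' = (-v) • a + u • b :=
    calc b' = -KF a' b' a' := by rw [KF_apply_left ha' hab', neg_neg]
      _ = -KF a b a' := by rw [h]
      _ = (-v) • a + u • b := by rw [KF_apply]; module
  have ha'_eq : a' = u • a + v • b :=
    calc a' = KF a' b' b' := (KF_apply_right hb' hab').symm
      _ = KF a b b' := by rw [h]
      _ = u • a + v • b := by
        rw [KF_apply, hb'_eq]
        simp only [inner_add_right, real_inner_smul_right, real_inner_self_eq_norm_sq, ha, hb,
          hab, real_inner_comm a b]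
        module
  have huv : u ^ 2 + v ^ 2 = 1 :=
    calc u ^ 2 + v ^ 2 = ⟪u • a + v • b, a'⟫ := by
          rw [inner_add_left, real_inner_smul_left, real_inner_smul_left]; ring
      _ = 1 := by rw [← ha'_eq, real_inner_self_eq_norm_sq, ha', one_pow]
  obtain ⟨θ, hcos, hsin⟩ := Real.exists_cos_sin_eq_of_sq_add_sq_eq_one huv
  exact ⟨θ, by rw [ha'_eq, hcos, hsin], by rw [hb'_eq, hcos, hsin]⟩

/-- Invariance criterion (proof of Theorem 4.1): for orthonormal `a, b` and a linear
isometry `A ∈ O(4)`, the Killing field `X_{Aa∧Ab}` coincides with `X_{a∧b}` iff `A`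
preserves the plane spanned by `{a, b}` and restricts to it as a rotation. -/
theorem killing_invariant_iff_rotation (a b : F4) (ha : ‖a‖ = 1) (hb : ‖b‖ = 1)
    (hab : ⟪a, b⟫ = 0) (A : F4 →ₗᵢ[ℝ] F4) :
    (∀ p : F4, KF (A a) (A b) p = KF a b p) ↔
      ∃ θ : ℝ, A a = cos θ • a + sin θ • b ∧ A b = (-sin θ) • a + cos θ • b := by
  constructor
  · intro h
    exact exists_rotation_of_KF_eq ha hb hab (by rw [A.norm_map, ha]) (by rw [A.norm_map, hb])
      (by rw [A.inner_map_map, hab]) (funext h)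
  · rintro ⟨θ, hAa, hAb⟩ p
    have hdet : cos θ * cos θ - sin θ * -sin θ = 1 := by linear_combination cos_sq_add_sin_sq θ
    rw [hAa, hAb, KF_smul_add_smul, hdet, one_smul]
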